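/- arXiv:1307.2975 — 2 statements merged into one kernel-verified Lean document; each statement's English description precedes it below -/
import Mathlib

section
/- Let n ≥ 1, let z₁,…,z_n ∈ ℂ be distinct with Im z_k > 0 for each k, and let r₁,…,r_n, s₁,…,s_n ∈ ℂ² satisfy the linear system (L1). Define, for z ∈ ℂ with z ∉ {z₁,…,z_n, conj(z₁),…,conj(z_n)}, the matrices χ(z) := I + Σ_{k=1}^n i (r_k ⊗ conj(s_k))/(z − z_k) and χ⁺(z) := I − Σ_{k=1}^n i (s_k ⊗ conj(r_k))/(z − conj(z_k)). Then χ(z) χ⁺(z) = I for every such z. -/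
open MeasureTheory Matrix ENNReal Filter

noncomputable section

/-- The Pauli matrix `σ₃ = diag(1, -1)`. -/
def sigma3 : Matrix (Fin 2) (Fin 2) ℂ := !![1, 0; 0, -1]

/-- `Q(w)` : the off-diagonal matrix with `(1,2)`-entry `w` and `(2,1)`-entry `-conj w`. -/
def Qm (w : ℂ) : Matrix (Fin 2) (Fin 2) ℂ := !![0, w; -(starRingEnd ℂ w), 0]

/-- The Hermitian inner product `⟨u,v⟩ = conj u₁ * v₁ + conj u₂ * v₂` on `ℂ²`. -/
def inn (u v : Fin 2 → ℂ) : ℂ := starRingEnd ℂ (u 0) * v 0 + starRingEnd ℂ (u 1) * v 1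

/-- The outer product `u ⊗ conj v`. -/
def outer (u v : Fin 2 → ℂ) : Matrix (Fin 2) (Fin 2) ℂ :=
  Matrix.of fun a b => u a * starRingEnd ℂ (v b)

/-- The Gramian matrix `M_{k,j} = -i ⟨s_j, s_k⟩ / (conj z_k - z_j)`. -/
def gram {n : ℕ} (z : Fin n → ℂ) (s : Fin n → Fin 2 → ℂ) : Matrix (Fin n) (Fin n) ℂ :=
  Matrix.of fun k j => -Complex.I * inn (s j) (s k) / (starRingEnd ℂ (z k) - z j)

/-- The `(j,k)`-cofactor `D_{j,k}` of a square matrix. -/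
def cof {n : ℕ} (A : Matrix (Fin n) (Fin n) ℂ) (j k : Fin n) : ℂ := A.adjugate k j

/-- The linear system (L1): `i s_k = ∑_j (⟨s_j,s_k⟩/(conj z_k - z_j)) r_j`. -/
def L1sys {n : ℕ} (z : Fin n → ℂ) (s r : Fin n → Fin 2 → ℂ) : Prop :=
  ∀ k, Complex.I • s k = ∑ j, (inn (s j) (s k) / (starRingEnd ℂ (z k) - z j)) • r j

/-- The linear system (L2): `i r_k = ∑_j (⟨r_j,r_k⟩/(conj z_j - z_k)) s_j`. -/
def L2sys {n : ℕ} (z : Fin n → ℂ) (s r : Fin n → Fin 2 → ℂ) : Prop :=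
  ∀ k, Complex.I • r k = ∑ j, (inn (r j) (r k) / (starRingEnd ℂ (z j) - z k)) • s j

/-- A classical solution of the cubic NLS equation `i q_t + q_xx + 2 |q|² q = 0`;
functions of `(x, t)` are encoded as `q : ℝ → ℝ → ℂ`, `x` first. -/
def IsClassicalNLS (q : ℝ → ℝ → ℂ) : Prop :=
  (∀ t, ContDiff ℝ 2 fun x => q x t) ∧ (∀ x, ContDiff ℝ 1 fun t => q x t) ∧
    ∀ x t, Complex.I * deriv (fun τ => q x τ) t + deriv (deriv fun y => q y t) x
      + 2 * (‖q x t‖ : ℂ) ^ 2 * q x t = 0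

/-- The `x`-part Lax matrix `U = -i z σ₃ + Q(w)`. -/
def Ux (z w : ℂ) : Matrix (Fin 2) (Fin 2) ℂ := (-(Complex.I * z)) • sigma3 + Qm w

/-- The `t`-part Lax matrix `V = i(|w|² - 2z²) σ₃ + 2 z Q(w) - i Q(w_x) σ₃`. -/
def Vt (z w wx : ℂ) : Matrix (Fin 2) (Fin 2) ℂ :=
  (Complex.I * ((‖w‖ : ℂ) ^ 2 - 2 * z ^ 2)) • sigma3 + (2 * z) • Qm w
    - Complex.I • (Qm wx * sigma3)

/-- The dressed potential `q = q₀ - (2/D) ∑_{k,j} D_{j,k} s_{j,1} conj (s_{k,2})` (pointwise). -/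
def dressQ {n : ℕ} (z : Fin n → ℂ) (q0 : ℂ) (s : Fin n → Fin 2 → ℂ) : ℂ :=
  q0 - 2 / (gram z s).det *
    ∑ k, ∑ j, cof (gram z s) j k * s j 0 * starRingEnd ℂ (s k 1)

/-- `Σ^S` of the 2-soliton, as a function of the phases `φ₁, φ₂, ψ₁, ψ₂`. -/
def SigmaSof (η₁ η₂ ξ₁ ξ₂ φ₁ φ₂ ψ₁ ψ₂ : ℝ) : ℂ :=
  (Complex.exp (-2*(η₂:ℂ)*(φ₂:ℂ) + 2*Complex.I*(ψ₁:ℂ)) +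
      Complex.exp (2*(η₂:ℂ)*(φ₂:ℂ) + 2*Complex.I*(ψ₁:ℂ))) / (2*(η₂:ℂ))
  + (Complex.exp (-2*(η₁:ℂ)*(φ₁:ℂ) + 2*Complex.I*(ψ₂:ℂ)) +
      Complex.exp (2*(η₁:ℂ)*(φ₁:ℂ) + 2*Complex.I*(ψ₂:ℂ))) / (2*(η₁:ℂ))
  - (Complex.exp (-2*(η₂:ℂ)*(φ₂:ℂ) + 2*Complex.I*(ψ₁:ℂ)) +
      Complex.exp (2*(η₁:ℂ)*(φ₁:ℂ) + 2*Complex.I*(ψ₂:ℂ))) /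
        ((η₁:ℂ) + (η₂:ℂ) + Complex.I*((ξ₁:ℂ) - (ξ₂:ℂ)))
  - (Complex.exp (-2*(η₁:ℂ)*(φ₁:ℂ) + 2*Complex.I*(ψ₂:ℂ)) +
      Complex.exp (2*(η₂:ℂ)*(φ₂:ℂ) + 2*Complex.I*(ψ₁:ℂ))) /
        ((η₁:ℂ) + (η₂:ℂ) - Complex.I*((ξ₁:ℂ) - (ξ₂:ℂ)))

/-- `D^S` of the 2-soliton, as a function of the phases `φ₁, φ₂, ψ₁, ψ₂`. -/
def DSof (η₁ η₂ ξ₁ ξ₂ φ₁ φ₂ ψ₁ ψ₂ : ℝ) : ℂ :=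
  (Complex.exp (-2*(η₁:ℂ)*(φ₁:ℂ)) + Complex.exp (2*(η₁:ℂ)*(φ₁:ℂ))) *
      (Complex.exp (-2*(η₂:ℂ)*(φ₂:ℂ)) + Complex.exp (2*(η₂:ℂ)*(φ₂:ℂ))) / (4*(η₁:ℂ)*(η₂:ℂ))
  - (Complex.exp (-(η₁:ℂ)*(φ₁:ℂ) - (η₂:ℂ)*(φ₂:ℂ) + Complex.I*((ψ₁:ℂ) - (ψ₂:ℂ))) +
      Complex.exp ((η₁:ℂ)*(φ₁:ℂ) + (η₂:ℂ)*(φ₂:ℂ) - Complex.I*((ψ₁:ℂ) - (ψ₂:ℂ)))) *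
    (Complex.exp (-(η₁:ℂ)*(φ₁:ℂ) - (η₂:ℂ)*(φ₂:ℂ) - Complex.I*((ψ₁:ℂ) - (ψ₂:ℂ))) +
      Complex.exp ((η₁:ℂ)*(φ₁:ℂ) + (η₂:ℂ)*(φ₂:ℂ) + Complex.I*((ψ₁:ℂ) - (ψ₂:ℂ)))) /
    (((η₁:ℂ) + (η₂:ℂ))^2 + ((ξ₁:ℂ) - (ξ₂:ℂ))^2)

/-- The phase `φ = x + 4 ξ t - x_c`. -/
def phiSol (ξ xc x t : ℝ) : ℝ := x + 4*ξ*t - xc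

/-- The phase `ψ = θ - ξ (x + 2 ξ t - x_c) + 2 η² t`. -/
def psiSol (θ ξ xc η x t : ℝ) : ℝ := θ - ξ*(x + 2*ξ*t - xc) + 2*η^2*t

/-- `D^S(x,t)` for the 2-soliton with parameters `η₁, η₂, ξ₁, ξ₂, x₁, x₂, θ₁, θ₂`. -/
def twoSolitonD (η₁ η₂ ξ₁ ξ₂ x₁ x₂ θ₁ θ₂ x t : ℝ) : ℂ :=
  DSof η₁ η₂ ξ₁ ξ₂ (phiSol ξ₁ x₁ x t) (phiSol ξ₂ x₂ x t)
    (psiSol θ₁ ξ₁ x₁ η₁ x t) (psiSol θ₂ ξ₂ x₂ η₂ x t)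

/-- `Σ^S(x,t)` for the 2-soliton. -/
def twoSolitonSigma (η₁ η₂ ξ₁ ξ₂ x₁ x₂ θ₁ θ₂ x t : ℝ) : ℂ :=
  SigmaSof η₁ η₂ ξ₁ ξ₂ (phiSol ξ₁ x₁ x t) (phiSol ξ₂ x₂ x t)
    (psiSol θ₁ ξ₁ x₁ η₁ x t) (psiSol θ₂ ξ₂ x₂ η₂ x t)

/-- The 2-soliton `q^S = 2 Σ^S / D^S`. -/
def twoSoliton (η₁ η₂ ξ₁ ξ₂ x₁ x₂ θ₁ θ₂ x t : ℝ) : ℂ :=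
  2 * twoSolitonSigma η₁ η₂ ξ₁ ξ₂ x₁ x₂ θ₁ θ₂ x t / twoSolitonD η₁ η₂ ξ₁ ξ₂ x₁ x₂ θ₁ θ₂ x t

/-- The separable (Jost-type) form
`s = e^{-i conj z (x - x_j) - 2 i conj z² t + i θ_j} f - e^{i conj z (x - x_j) + 2 i conj z² t - i θ_j} g`. -/
def jost (zj : ℂ) (xj θj : ℝ) (f g : ℝ → ℝ → Fin 2 → ℂ) (x t : ℝ) : Fin 2 → ℂ :=
  Complex.exp (-(Complex.I) * starRingEnd ℂ zj * ((x:ℂ) - (xj:ℂ))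
      - 2*Complex.I*(starRingEnd ℂ zj)^2*(t:ℂ) + Complex.I*(θj:ℂ)) • f x t
  - Complex.exp (Complex.I * starRingEnd ℂ zj * ((x:ℂ) - (xj:ℂ))
      + 2*Complex.I*(starRingEnd ℂ zj)^2*(t:ℂ) - Complex.I*(θj:ℂ)) • g x t

/-- The pair of eigenvalues `z_j = ξ_j + i η_j`, `j = 1, 2`. -/
def zvec (ξ₁ η₁ ξ₂ η₂ : ℝ) : Fin 2 → ℂ :=
  ![(ξ₁:ℂ) + (η₁:ℂ)*Complex.I, (ξ₂:ℂ) + (η₂:ℂ)*Complex.I]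

/-- The two vector functions `s₁, s₂` in separable form. -/
def sJ (ξ₁ η₁ ξ₂ η₂ x₁ x₂ θ₁ θ₂ : ℝ) (f g : Fin 2 → ℝ → ℝ → Fin 2 → ℂ) (j : Fin 2)
    (x t : ℝ) : Fin 2 → ℂ :=
  jost (zvec ξ₁ η₁ ξ₂ η₂ j) (![x₁, x₂] j) (![θ₁, θ₂] j) (f j) (g j) x t

/-- The explicit vector solutions used to build the `n`-soliton from `q₀ = 0`. -/
def solS {n : ℕ} (z : Fin n → ℂ) (xs θ : Fin n → ℝ) (j : Fin n) (x t : ℝ) : Fin 2 → ℂ :=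
  ![Complex.exp (-(Complex.I) * starRingEnd ℂ (z j) * ((x:ℂ) - ((xs j : ℝ):ℂ))
      - 2*Complex.I*(starRingEnd ℂ (z j))^2*(t:ℂ) + Complex.I*((θ j : ℝ):ℂ)),
    -Complex.exp (Complex.I * starRingEnd ℂ (z j) * ((x:ℂ) - ((xs j : ℝ):ℂ))
      + 2*Complex.I*(starRingEnd ℂ (z j))^2*(t:ℂ) - Complex.I*((θ j : ℝ):ℂ))]

/-- The `n`-soliton with parameters `{ξ_j, η_j, x_j, θ_j}`. -/
def nSoliton {n : ℕ} (ξ η xs θ : Fin n → ℝ) (x t : ℝ) : ℂ :=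
  dressQ (fun j => (ξ j : ℂ) + (η j : ℂ)*Complex.I) 0
    (fun j => solS (fun j => (ξ j : ℂ) + (η j : ℂ)*Complex.I) xs θ j x t)

/-!
Write `χ = 1 + A` and `χ⁺ = 1 - B`; it suffices that `A B = A - B`. Expanding `A B` gives a double
sum of `r_k ⊗ conj r_l` with coefficients `(i/(w - z_k)) (i/(w - conj z_l)) ⟨s_k, s_l⟩`. Partial
fractions split these as `(i/(w - z_k) - i/(w - conj z_l)) M_{l,k}`, where `M = gram z s` is
Hermitian, and (L1), read as `s_k = ∑_j M_{k,j} r_j`, sums the two halves back to `A` and `B`.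
-/

open ComplexConjugate

lemma outer_mul_outer (u v a b : Fin 2 → ℂ) :
    outer u v * outer a b = inn v a • outer u b := by
  ext i j
  simp only [outer, inn, mul_apply, of_apply, Fin.sum_univ_two, Matrix.smul_apply, smul_eq_mul]
  ring

lemma smul_outer (c : ℂ) (u v : Fin 2 → ℂ) : outer (c • u) v = c • outer u v := by
  ext i j
  simp only [outer, of_apply, Pi.smul_apply, Matrix.smul_apply, smul_eq_mul]
  ring

lemma outer_smul (c : ℂ) (u v : Fin 2 → ℂ) : outer u (c • v) = conj c • outer u v := by
  ext i j
  simp only [outer, of_apply, Pi.smul_apply, Matrix.smul_apply, smul_eq_mul, map_mul]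
  ring

lemma sum_outer {ι : Type*} (t : Finset ι) (f : ι → Fin 2 → ℂ) (v : Fin 2 → ℂ) :
    outer (∑ k ∈ t, f k) v = ∑ k ∈ t, outer (f k) v := by
  ext i j
  simp only [outer, of_apply, Matrix.sum_apply, Finset.sum_apply, Finset.sum_mul]

lemma outer_sum {ι : Type*} (t : Finset ι) (u : Fin 2 → ℂ) (f : ι → Fin 2 → ℂ) :
    outer u (∑ k ∈ t, f k) = ∑ k ∈ t, outer u (f k) := by
  ext i j
  simp only [outer, of_apply, Matrix.sum_apply, Finset.sum_apply, map_sum, Finset.mul_sum]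

lemma conj_inn (u v : Fin 2 → ℂ) : conj (inn u v) = inn v u := by
  simp only [inn, map_add, map_mul, Complex.conj_conj]
  ring

lemma gram_isHermitian {n : ℕ} (z : Fin n → ℂ) (s : Fin n → Fin 2 → ℂ) :
    (gram z s).IsHermitian := by
  ext k l
  simp only [conjTranspose_apply, _root_.gram, of_apply, Complex.star_def, map_div₀, map_mul,
    map_neg, Complex.conj_I, conj_inn, map_sub, Complex.conj_conj]
  rw [← neg_sub (z l), div_neg]
  ring

lemma gram_apply_eq_div {n : ℕ} (z : Fin n → ℂ) (s : Fin n → Fin 2 → ℂ) (k l : Fin n) :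
    gram z s l k = Complex.I * inn (s k) (s l) / (z k - conj (z l)) := by
  rw [_root_.gram, of_apply, ← neg_sub (z k), div_neg]
  ring

lemma div_sub_mul_div_sub {K : Type*} [Field K] {w a b : K} (x y : K)
    (ha : w ≠ a) (hb : w ≠ b) (hab : a ≠ b) :
    x / (w - a) * (y / (w - b)) = (x / (w - a) - x / (w - b)) * (y / (a - b)) := by
  have := sub_ne_zero.2 ha
  have := sub_ne_zero.2 hb
  have := sub_ne_zero.2 hab
  field_simp
  ring

namespace L1sys

variable {n : ℕ} {z : Fin n → ℂ} {r s : Fin n → Fin 2 → ℂ}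

lemma eq_sum_gram_smul (h : L1sys z s r) (k : Fin n) : s k = ∑ j, gram z s k j • r j := by
  calc s k = (-Complex.I) • (Complex.I • s k) := by rw [smul_smul]; simp
    _ = ∑ j, gram z s k j • r j := by
      rw [h k, Finset.smul_sum]
      refine Finset.sum_congr rfl fun j _ => ?_
      rw [smul_smul, _root_.gram, of_apply, mul_div_assoc]

lemma outer_eq_sum_gram_smul_left (h : L1sys z s r) (k : Fin n) :
    outer (r k) (s k) = ∑ l, gram z s l k • outer (r k) (r l) := by
  rw [h.eq_sum_gram_smul k, outer_sum]
  refine Finset.sum_congr rfl fun l _ => ?_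
  rw [outer_smul, ← Complex.star_def, ← conjTranspose_apply, (gram_isHermitian z s).eq]

lemma outer_eq_sum_gram_smul_right (h : L1sys z s r) (l : Fin n) :
    outer (s l) (r l) = ∑ k, gram z s l k • outer (r k) (r l) := by
  rw [h.eq_sum_gram_smul l, sum_outer]
  simp only [smul_outer]

lemma sum_smul_outer_mul_sum_smul_outer (h : L1sys z s r) (α β : Fin n → ℂ)
    (hαβ : ∀ k l, α k * β l * inn (s k) (s l) = (α k - β l) * gram z s l k) :
    (∑ k, α k • outer (r k) (s k)) * (∑ l, β l • outer (s l) (r l)) =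
      ∑ k, α k • outer (r k) (s k) - ∑ l, β l • outer (s l) (r l) := by
  calc (∑ k, α k • outer (r k) (s k)) * (∑ l, β l • outer (s l) (r l))
      = ∑ k, ∑ l, (α k * β l * inn (s k) (s l)) • outer (r k) (r l) := by
        simp only [Finset.sum_mul_sum, smul_mul_smul_comm, outer_mul_outer, smul_smul]
    _ = ∑ k, α k • ∑ l, gram z s l k • outer (r k) (r l)
          - ∑ l, β l • ∑ k, gram z s l k • outer (r k) (r l) := by
        simp only [hαβ, sub_mul, sub_smul, Finset.sum_sub_distrib, Finset.smul_sum, smul_smul]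
        rw [Finset.sum_comm (f := fun k l => (β l * gram z s l k) • outer (r k) (r l))]
    _ = _ := by
        simp only [← h.outer_eq_sum_gram_smul_left, ← h.outer_eq_sum_gram_smul_right]

end L1sys

theorem stmt_1_general (n : ℕ) (z : Fin n → ℂ)
    (him : ∀ k, 0 < (z k).im) (r s : Fin n → Fin 2 → ℂ)
    (hL1 : L1sys z s r) (w : ℂ)
    (hw : ∀ k, w ≠ z k ∧ w ≠ starRingEnd ℂ (z k)) :
    (1 + ∑ k, (Complex.I / (w - z k)) • outer (r k) (s k)) *
      (1 - ∑ k, (Complex.I / (w - starRingEnd ℂ (z k))) • outer (s k) (r k)) = 1 := by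
  have hz : ∀ k l, z k ≠ conj (z l) := fun k l h => by
    have := congrArg Complex.im h
    rw [Complex.conj_im] at this
    linarith [him k, him l]
  have hAB := hL1.sum_smul_outer_mul_sum_smul_outer (fun k => Complex.I / (w - z k))
    (fun l => Complex.I / (w - conj (z l))) fun k l => by
      rw [gram_apply_eq_div, mul_div_right_comm, ← mul_assoc,
        ← div_sub_mul_div_sub _ _ (hw k).1 (hw l).2 (hz k l)]
  rw [mul_sub, mul_one, add_mul, one_mul, hAB]
  abel

/-- `χ(z) χ⁺(z) = I` for the dressing factors, given the linear system (L1). -/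
theorem stmt_1 (n : ℕ) (hn : 1 ≤ n) (z : Fin n → ℂ) (hz : Function.Injective z)
    (him : ∀ k, 0 < (z k).im) (r s : Fin n → Fin 2 → ℂ)
    (hL1 : L1sys z s r) (w : ℂ)
    (hw : ∀ k, w ≠ z k ∧ w ≠ starRingEnd ℂ (z k)) :
    (1 + ∑ k, (Complex.I / (w - z k)) • outer (r k) (s k)) *
      (1 - ∑ k, (Complex.I / (w - starRingEnd ℂ (z k))) • outer (s k) (r k)) = 1 :=
  stmt_1_general n z him r s hL1 w hw
end
end

section
/- Let q₀ : ℝ → ℂ be continuous, let z₁,…,z_n ∈ ℂ have Im z_k > 0, and suppose s₁,…,s_n : ℝ → ℂ² are differentiable solutions of s_k′(x) = −i conj(z_k) σ₃ s_k(x) + Q(q₀(x)) s_k(x). Then each entry of the Gramian matrix M(x) of (z₁,…,z_n; s₁(x),…,s_n(x)) is differentiable in x with (d/dx) M_{k,j}(x) = −⟨s_j(x), σ₃ s_k(x)⟩ for all k, j and all x ∈ ℝ. -/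
/-!
Differentiate `⟨s_j, s_k⟩` along the Lax equations `s_k' = U(conj z_k) s_k`. Since `σ₃` is
Hermitian and `Q(q₀)` is anti-Hermitian, the potential drops out and what remains is
`-i (conj z_k - z_j) ⟨s_j, σ₃ s_k⟩`. This factor is exactly the denominator of `M_{k,j}`
(nonzero because `Im z > 0`), and `(-i)² = -1` gives the sign.
-/

open MeasureTheory Matrix ENNReal Filter

noncomputable section

theorem inn_eq_star_dotProduct (u v : Fin 2 → ℂ) : inn u v = star u ⬝ᵥ v := by
  simp [inn, dotProduct, Fin.sum_univ_two]

theorem inn_mulVec_left (A : Matrix (Fin 2) (Fin 2) ℂ) (u v : Fin 2 → ℂ) :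
    inn (A *ᵥ u) v = inn u (Aᴴ *ᵥ v) := by
  simp only [inn_eq_star_dotProduct, star_mulVec, dotProduct_mulVec]

theorem sigma3_conjTranspose : sigma3ᴴ = sigma3 := by
  ext a b; fin_cases a <;> fin_cases b <;> simp [sigma3]

theorem Qm_conjTranspose (w : ℂ) : (Qm w)ᴴ = -Qm w := by
  ext a b; fin_cases a <;> fin_cases b <;> simp [Qm]

theorem Ux_conjTranspose (z w : ℂ) :
    (Ux z w)ᴴ = (Complex.I * starRingEnd ℂ z) • sigma3 - Qm w := by
  simp [Ux, conjTranspose_add, conjTranspose_smul, sigma3_conjTranspose, Qm_conjTranspose,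
    sub_eq_add_neg]

theorem inn_Ux_mulVec_add_inn_Ux_mulVec (a b w : ℂ) (u v : Fin 2 → ℂ) :
    inn (Ux a w *ᵥ u) v + inn u (Ux b w *ᵥ v)
      = -Complex.I * (b - starRingEnd ℂ a) * inn u (sigma3 *ᵥ v) := by
  rw [inn_mulVec_left, Ux_conjTranspose, Ux, sub_mulVec, add_mulVec, smul_mulVec, smul_mulVec]
  simp only [inn_eq_star_dotProduct, dotProduct_add, dotProduct_sub, dotProduct_smul, smul_eq_mul]
  ring

theorem HasDerivAt.inn {u v : ℝ → Fin 2 → ℂ} {u' v' : Fin 2 → ℂ} {x : ℝ}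
    (hu : HasDerivAt u u' x) (hv : HasDerivAt v v' x) :
    HasDerivAt (fun y => inn (u y) (v y)) (inn u' (v x) + inn (u x) v') x := by
  have hu i := hasDerivAt_pi.mp hu i
  have hv i := hasDerivAt_pi.mp hv i
  refine (((hu 0).star.mul (hv 0)).add ((hu 1).star.mul (hv 1))).congr_deriv ?_
  simp only [_root_.inn, Complex.star_def]
  ring

theorem conj_sub_ne_zero_of_im_pos {a b : ℂ} (ha : 0 < a.im) (hb : 0 < b.im) :
    starRingEnd ℂ a - b ≠ 0 := by
  intro h
  have := congrArg Complex.im h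
  simp only [Complex.sub_im, Complex.conj_im, Complex.zero_im] at this
  linarith

theorem stmt_8_general (n : ℕ) (q₀ : ℝ → ℂ)
    (z : Fin n → ℂ) (him : ∀ k, 0 < (z k).im)
    (s : Fin n → ℝ → Fin 2 → ℂ)
    (hs : ∀ k x, HasDerivAt (s k) ((Ux (starRingEnd ℂ (z k)) (q₀ x)).mulVec (s k x)) x) :
    ∀ k j x, HasDerivAt (fun y => gram z (fun m => s m y) k j)
      (-(inn (s j x) (sigma3.mulVec (s k x)))) x := by
  intro k j x
  have hden := conj_sub_ne_zero_of_im_pos (him k) (him j)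
  have hderiv := ((hs j x).inn (hs k x)).const_mul (-Complex.I) |>.div_const
    (starRingEnd ℂ (z k) - z j)
  rw [inn_Ux_mulVec_add_inn_Ux_mulVec, Complex.conj_conj] at hderiv
  refine hderiv.congr_deriv ?_
  rw [div_eq_iff hden]
  linear_combination ((starRingEnd ℂ (z k) - z j) * inn (s j x) (sigma3 *ᵥ s k x)) * Complex.I_sq

/-- Differentiating the Gramian entries: `(d/dx) M_{k,j} = -⟨s_j, σ₃ s_k⟩`. -/
theorem stmt_8 (n : ℕ) (q₀ : ℝ → ℂ) (hq₀ : Continuous q₀)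
    (z : Fin n → ℂ) (him : ∀ k, 0 < (z k).im)
    (s : Fin n → ℝ → Fin 2 → ℂ)
    (hs : ∀ k x, HasDerivAt (s k) ((Ux (starRingEnd ℂ (z k)) (q₀ x)).mulVec (s k x)) x) :
    ∀ k j x, HasDerivAt (fun y => gram z (fun m => s m y) k j)
      (-(inn (s j x) (sigma3.mulVec (s k x)))) x :=
  stmt_8_general n q₀ z him s hs
end
end
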